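/- Let i ≥ 0 be odd and let g be an E-linear automorphism of V with h(gx,gy) = h(x,y) for all x,y ∈ V, and with g(A_i) = A_i and g(B_i) = B_i. Then gx − x ∈ B_i for every x ∈ A_i if and only if gy − y ∈ A_i^⊥ for every y ∈ B_i^⊥; that is, g induces the identity on A_i/B_i if and only if g induces the identity on B_i^⊥/A_i^⊥. -/

import Mathlib

/-- For a subset `M ⊆ V`, the "dual" set `M^⊥ = {x ∈ V : H(x,M) ⊆ B}`. -/
def perpSet (B : Type*) {E V : Type*} [CommRing B] [Field E] [Algebra B E]
    [AddCommGroup V] [Module E V] (H : V → V → E) (S : Set V) : Set V :=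
  {x | ∀ y ∈ S, ∃ b : B, H x y = algebraMap B E b}

/-- `A_i = {x ∈ L : h(x,L) ⊆ π^i B}`, viewed inside `V`. -/
def AiSetV {B E V : Type*} [CommRing B] [Field E] [Algebra B E]
    [AddCommGroup V] [Module E V] [Module B V]
    (L : Submodule B V) (π : B) (H : V → V → E) (i : ℕ) : Set V :=
  {x | x ∈ L ∧ ∀ w ∈ L, ∃ b : B, H x w = algebraMap B E (π ^ i * b)}

/-- `B_i = {x ∈ A_i : h(x,x) ∈ 2^{m+1} A}` where `m = ⌈i/2⌉`, viewed inside `V`. -/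
def BiSetV (A : Type*) {B E V : Type*} [CommRing A] [CommRing B] [Field E]
    [Algebra B E] [Algebra A E] [AddCommGroup V] [Module E V] [Module B V]
    (L : Submodule B V) (π : B) (H : V → V → E) (i : ℕ) : Set V :=
  {x | x ∈ AiSetV L π H i ∧ ∃ a : A, H x x = algebraMap A E (2 ^ ((i + 1) / 2 + 1) * a)}

/-- `Y_i = {x ∈ B_i : h(x,B_i) ⊆ π^{i+1} B}`, viewed inside `V`. -/
def YiSetV (A : Type*) {B E V : Type*} [CommRing A] [CommRing B] [Field E]
    [Algebra B E] [Algebra A E] [AddCommGroup V] [Module E V] [Module B V]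
    (L : Submodule B V) (π : B) (H : V → V → E) (i : ℕ) : Set V :=
  {x | x ∈ BiSetV A L π H i ∧
    ∀ w ∈ BiSetV A L π H i, ∃ b : B, H x w = algebraMap B E (π ^ (i + 1) * b)}

/-! The forward implication is formal: for `y ∈ B_i^⊥` and `x ∈ A_i` put `x' = g⁻¹ x ∈ A_i`;
then `h(gy - y, x) = -h(y, gx' - x') ∈ B`. In the same way the backward hypothesis gives
`h(gx - x, y) ∈ B` for all `y ∈ B_i^⊥`, i.e. `gx - x ∈ B_i^⊥⊥`, so it remains to see
`B_i^⊥⊥ ⊆ B_i`. Because `i = 2k + 1` is odd, for `x ∈ A_i` and `y ∈ L` the cross term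
`h(x,y) + h(y,x) = π^i (b - σ b)` lies in `π^{i+1} · 2A = 2^{k+2} A`, so `B_i` is a
`B`-submodule; it contains `π^{i+1} L`, hence is a lattice. Finally `B` is a discrete valuation
ring with uniformizer `π` (an element `a₁ + a₂ π` is a unit iff `a₁` is), so `B_i` has a basis, and
the basis dual to it for the nondegenerate form `h` shows `B_i^⊥⊥ ⊆ B_i`. -/

theorem exists_isSymm_sesqForm_eq {E V : Type*} [Field E] [AddCommGroup V] [Module E V]
    (σE : E ≃+* E) (H : V → V → E) (Hadd : ∀ x y z : V, H (x + y) z = H x z + H y z)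
    (Hsmul : ∀ (a b : E) (v w : V), H (a • v) (b • w) = σE a * b * H v w)
    (Hsymm : ∀ v w : V, H w v = σE (H v w)) :
    ∃ S : V →ₛₗ[(σE : E →+* E)] V →ₗ[E] E, S.IsSymm ∧ (fun x y => S x y) = H := by
  have Hadd' : ∀ x y z : V, H x (y + z) = H x y + H x z := fun x y z => by
    rw [Hsymm, Hadd, map_add, ← Hsymm, ← Hsymm]
  refine ⟨LinearMap.mk₂'ₛₗ _ _ H Hadd (fun c x y => by simpa using Hsmul c 1 x y) Hadd'
    (fun c x y => by simpa using Hsmul 1 c x y), ⟨fun x y => (Hsymm x y).symm⟩, rfl⟩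

section Duality

variable {R K V : Type*} [CommRing R] [Field K] [Algebra R K]
  [AddCommGroup V] [Module K V] [Module R V] [IsScalarTower R K V]
  {τ : K ≃+* K} (S : V →ₛₗ[(τ : K →+* K)] V →ₗ[K] K)

theorem exists_dual_basis (hS : S.IsSymm) (hnd : S.SeparatingLeft) {ι : Type*} [Fintype ι]
    [DecidableEq ι] (v : Module.Basis ι K V) :
    ∃ f : ι → V, ∀ t j, S (v t) (f j) = if t = j then 1 else 0 := by
  set Φ : V →ₗ[K] ι → K := LinearMap.pi fun t => S (v t)
  have hΦ : Function.Injective Φ := by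
    rw [← LinearMap.ker_eq_bot, LinearMap.ker_eq_bot']
    intro y hy
    refine hnd y fun x => ?_
    have hx : S x y = 0 := by
      simp only [Φ, funext_iff, LinearMap.pi_apply, Pi.zero_apply] at hy
      rw [← v.sum_repr x, map_sum, LinearMap.sum_apply]
      simp [hy]
    rw [← hS.eq, hx, map_zero]
  have := v.finiteDimensional_of_finite
  have hsurj := (LinearMap.injective_iff_surjective_of_finrank_eq_finrank
    (by simp [Module.finrank_eq_card_basis v])).mp hΦ
  choose f hf using fun j => hsurj (Pi.single j 1)
  refine ⟨f, fun t j => ?_⟩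
  have := congrFun (hf j) t
  simp only [Φ, LinearMap.pi_apply] at this
  rw [this, Pi.single_apply]

theorem perpSet_perpSet_subset [IsDomain R] [IsPrincipalIdealRing R] [IsFractionRing R K]
    (hS : S.IsSymm) (hnd : S.SeparatingLeft) (ρ : R ≃+* R)
    (hτ : ∀ r, τ (algebraMap R K r) = algebraMap R K (ρ r))
    (M : Submodule R V) [M.IsLattice K] :
    perpSet R (fun x y => S x y) (perpSet R (fun x y => S x y) M) ⊆ M := by
  classical
  let b := Module.Free.chooseBasis R M
  let v := b.extendOfIsLattice K
  obtain ⟨f, hf⟩ := exists_dual_basis S hS hnd v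
  have hfM : ∀ j, f j ∈ perpSet R (fun x y => S x y) M := by
    intro j m hm
    set c := b.repr ⟨m, hm⟩
    have hm' : m = ∑ l, c l • v l := by
      have := congrArg Subtype.val (b.sum_repr ⟨m, hm⟩)
      simp only [Submodule.coe_sum, Submodule.coe_smul] at this
      simp only [v, Module.Basis.extendOfIsLattice_apply, c, this]
    have hfv : ∀ l, S (f j) (v l) = if l = j then 1 else 0 := fun l => by
      rw [← hS.eq, hf]
      split_ifs <;> simp
    refine ⟨c j, ?_⟩
    show S (f j) m = _
    rw [hm']
    simp [hfv, Algebra.smul_def]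
  intro z hz
  have hcoord : ∀ j, ∃ r : R, v.repr z j = algebraMap R K r := by
    intro j
    obtain ⟨r, hr⟩ := hz (f j) (hfM j)
    have hzf : S z (f j) = τ (v.repr z j) := by
      conv_lhs => rw [← v.sum_repr z]
      simp only [map_sum, LinearMap.sum_apply, map_smulₛₗ, LinearMap.smul_apply, hf]
      simp
    refine ⟨ρ.symm r, τ.injective ?_⟩
    rw [← hzf, hτ, RingEquiv.apply_symm_apply]
    exact hr
  choose r hr using hcoord
  rw [← v.sum_repr z]
  refine M.sum_mem fun j _ => ?_
  rw [hr, algebraMap_smul, Module.Basis.extendOfIsLattice_apply]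
  exact M.smul_mem _ (b j).2

end Duality

section Isometry

variable {R K V : Type*} [CommRing R] [Field K] [Algebra R K]
  [AddCommGroup V] [Module K V]
  {τ : K ≃+* K} (S : V →ₛₗ[(τ : K →+* K)] V →ₗ[K] K)
  (g : V ≃ₗ[K] V)

theorem sub_mem_perpSet_of_sub_mem (hg : ∀ x y, S (g x) (g y) = S x y) {P Q : Set V}
    (hP : ∀ x ∈ P, g.symm x ∈ P) (h : ∀ x ∈ P, g x - x ∈ Q) :
    ∀ y ∈ perpSet R (fun x y => S x y) Q, g y - y ∈ perpSet R (fun x y => S x y) P := by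
  intro y hy x hx
  obtain ⟨r, hr⟩ := hy _ (h _ (hP x hx))
  refine ⟨-r, ?_⟩
  have hgy : S (g y) x = S y (g.symm x) := by
    simpa using hg y (g.symm x)
  beta_reduce at hr ⊢
  rw [LinearEquiv.apply_symm_apply] at hr
  simp only [map_sub, LinearMap.sub_apply, hgy, map_neg, ← hr]
  abel

theorem sub_mem_perpSet_perpSet_of_sub_mem_perpSet (hg : ∀ x y, S (g x) (g y) = S x y)
    (hS : S.IsSymm) (ρ : R ≃+* R) (hτ : ∀ r, τ (algebraMap R K r) = algebraMap R K (ρ r))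
    {P Q : Set V} (hQ : ∀ x ∈ Q, g x ∈ Q)
    (h : ∀ y ∈ perpSet R (fun x y => S x y) Q, g y - y ∈ perpSet R (fun x y => S x y) P) :
    ∀ x ∈ P, g x - x ∈ perpSet R (fun x y => S x y) (perpSet R (fun x y => S x y) Q) := by
  intro x hx y hy
  have hy' : g.symm y ∈ perpSet R (fun x y => S x y) Q := fun w hw => by
    show ∃ b, S (g.symm y) w = _
    rw [← hg, LinearEquiv.apply_symm_apply]
    exact hy _ (hQ w hw)
  obtain ⟨r, hr⟩ := h _ hy' x hx
  refine ⟨ρ (-r), ?_⟩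
  have hyg : S y (g x) = S (g.symm y) x := by
    simpa using hg (g.symm y) x
  beta_reduce at hr ⊢
  rw [← hτ, map_neg, ← hr, ← hS.eq, RingEquiv.coe_toRingHom]
  congr 1
  simp only [map_sub, LinearMap.sub_apply, hyg, LinearEquiv.apply_symm_apply]
  abel

end Isometry

section QuadraticExtension

open IsLocalRing

variable {A B : Type*} [CommRing A] [CommRing B] [Algebra A B]

variable (A) in
def IsBasisOneAnd (π : B) : Prop :=
  ∀ b : B, ∃! p : A × A, b = algebraMap A B p.1 + algebraMap A B p.2 * π

variable {π : B}

theorem IsBasisOneAnd.algebraMap_injective (hB : IsBasisOneAnd A π) :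
    Function.Injective (algebraMap A B) := by
  refine (injective_iff_map_eq_zero _).mpr fun a ha => ?_
  exact congrArg Prod.fst ((hB 0).unique (y₁ := (a, 0)) (y₂ := (0, 0)) (by simp [ha]) (by simp))

theorem IsBasisOneAnd.isUnit_of_isUnit_algebraMap (hB : IsBasisOneAnd A π) {a : A}
    (h : IsUnit (algebraMap A B a)) : IsUnit a := by
  obtain ⟨c, hc⟩ := h.exists_right_inv
  obtain ⟨⟨c₁, c₂⟩, rfl⟩ := (hB c).exists
  have := (hB 1).unique (y₁ := (a * c₁, a * c₂)) (y₂ := (1, 0))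
    (by rw [← hc]; simp only [map_mul]; ring) (by simp)
  exact .of_mul_eq_one _ (congrArg Prod.fst this)

theorem IsBasisOneAnd.finite (hB : IsBasisOneAnd A π) : Module.Finite A B := by
  classical
  refine ⟨⟨{1, π}, eq_top_iff.mpr fun b _ => ?_⟩⟩
  obtain ⟨⟨a₁, a₂⟩, rfl⟩ := (hB b).exists
  rw [Finset.coe_pair, Submodule.mem_span_pair]
  exact ⟨a₁, a₂, by simp [Algebra.smul_def]⟩

theorem add_mul_mul_sub_mul {c : A} (hπ : π ^ 2 = algebraMap A B c) (a₁ a₂ : A) :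
    (algebraMap A B a₁ + algebraMap A B a₂ * π) * (algebraMap A B a₁ - algebraMap A B a₂ * π) =
      algebraMap A B (a₁ ^ 2 - c * a₂ ^ 2) := by
  rw [map_sub, map_mul, ← hπ]
  simp only [map_pow]
  ring

theorem ne_zero_of_sq_eq_algebraMap (hB : IsBasisOneAnd A π) {c : A} (hc : c ≠ 0)
    (hπ : π ^ 2 = algebraMap A B c) : π ≠ 0 := by
  rintro rfl
  exact hc (hB.algebraMap_injective (by simpa using hπ.symm))

section Conjugation

variable {σ : B ≃ₐ[A] B}

theorem conj_add_mul (hσπ : σ π = -π) (a₁ a₂ : A) :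
    σ (algebraMap A B a₁ + algebraMap A B a₂ * π) = algebraMap A B a₁ - algebraMap A B a₂ * π := by
  rw [map_add, map_mul, hσπ, σ.commutes, σ.commutes]
  ring

theorem exists_sub_conj_eq (hσπ : σ π = -π) (hB : IsBasisOneAnd A π) (b : B) :
    ∃ a : A, b - σ b = algebraMap A B (2 * a) * π := by
  obtain ⟨⟨a₁, a₂⟩, rfl⟩ := (hB b).exists
  refine ⟨a₂, ?_⟩
  rw [conj_add_mul hσπ, map_mul, map_ofNat]
  ring

theorem exists_pow_odd_mul_add_conj_eq {δ : A} (hσπ : σ π = -π)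
    (hπ : π ^ 2 = algebraMap A B (2 * δ)) (hB : IsBasisOneAnd A π) (k : ℕ) (b : B) :
    ∃ a : A, π ^ (2 * k + 1) * b + σ (π ^ (2 * k + 1) * b) =
      algebraMap A B (2 ^ (k + 2) * a) := by
  obtain ⟨a, ha⟩ := exists_sub_conj_eq hσπ hB b
  refine ⟨δ ^ (k + 1) * a, ?_⟩
  have hsum : π ^ (2 * k + 1) * b + σ (π ^ (2 * k + 1) * b) =
      algebraMap A B (2 * a) * (π ^ 2) ^ (k + 1) := by
    rw [map_mul, map_pow, hσπ, Odd.neg_pow ⟨k, rfl⟩]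
    linear_combination π ^ (2 * k + 1) * ha
  rw [hsum, hπ, ← map_pow, ← map_mul]
  congr 1
  ring

theorem exists_mul_conj_eq (hσπ : σ π = -π) {c : A} (hπ : π ^ 2 = algebraMap A B c)
    (hB : IsBasisOneAnd A π) (b : B) :
    ∃ a : A, b * σ b = algebraMap A B a := by
  obtain ⟨⟨a₁, a₂⟩, rfl⟩ := (hB b).exists
  exact ⟨_, by rw [conj_add_mul hσπ, add_mul_mul_sub_mul hπ]⟩

theorem exists_eq_algebraMap_of_conj_eq [IsDomain A] [IsDomain B] (hσπ : σ π = -π)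
    (h2 : (2 : A) ≠ 0) (hπ0 : π ≠ 0) (hB : IsBasisOneAnd A π) {b : B} (hb : σ b = b) :
    ∃ a : A, b = algebraMap A B a := by
  obtain ⟨⟨a₁, a₂⟩, rfl⟩ := (hB b).exists
  rw [conj_add_mul hσπ] at hb
  have ha₂ : a₂ = 0 := by
    have h : algebraMap A B (2 * a₂) * π = 0 := by
      rw [map_mul, map_ofNat]
      linear_combination -hb
    have := hB.algebraMap_injective
      ((mul_eq_zero.mp h).resolve_right hπ0 |>.trans (map_zero _).symm)
    exact (mul_eq_zero.mp this).resolve_left h2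
  exact ⟨a₁, by simp [ha₂]⟩

end Conjugation

variable {ϖ δ : A}

theorem isUnit_add_mul_of_isUnit [IsLocalRing A] (hϖ : ϖ ∈ maximalIdeal A)
    (hπ : π ^ 2 = algebraMap A B (ϖ * δ)) {a₁ : A} (ha₁ : IsUnit a₁) (a₂ : A) :
    IsUnit (algebraMap A B a₁ + algebraMap A B a₂ * π) := by
  have hN : IsUnit (a₁ ^ 2 - ϖ * δ * a₂ ^ 2) := by
    by_contra hN
    have h := (maximalIdeal A).add_mem ((mem_maximalIdeal _).mpr hN)
      ((maximalIdeal A).mul_mem_right (δ * a₂ ^ 2) hϖ)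
    rw [← mul_assoc, sub_add_cancel] at h
    exact (mem_maximalIdeal _).mp h (ha₁.pow 2)
  exact isUnit_of_mul_isUnit_left (add_mul_mul_sub_mul hπ a₁ a₂ ▸ hN.map (algebraMap A B))

theorem add_mul_mem_span_of_not_isUnit [IsLocalRing A] (hϖ : maximalIdeal A = Ideal.span {ϖ})
    (hδ : IsUnit δ) (hπ : π ^ 2 = algebraMap A B (ϖ * δ)) {a₁ : A} (ha₁ : ¬IsUnit a₁) (a₂ : A) :
    algebraMap A B a₁ + algebraMap A B a₂ * π ∈ Ideal.span {π} := by
  obtain ⟨c, rfl⟩ := Ideal.mem_span_singleton'.mp (hϖ ▸ (mem_maximalIdeal _).mpr ha₁)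
  refine Ideal.mem_span_singleton'.mpr ⟨algebraMap A B a₂ + algebraMap A B (c * ↑hδ.unit⁻¹) * π, ?_⟩
  have hδδ : algebraMap A B δ * algebraMap A B ↑hδ.unit⁻¹ = 1 := by
    rw [← map_mul, hδ.mul_val_inv, map_one]
  simp only [map_mul] at hπ ⊢
  linear_combination (algebraMap A B c * algebraMap A B ↑hδ.unit⁻¹) * hπ +
    (algebraMap A B c * algebraMap A B ϖ) * hδδ

theorem not_isUnit_iff_mem_span [IsLocalRing A] (hϖ : maximalIdeal A = Ideal.span {ϖ})
    (hδ : IsUnit δ) (hπ : π ^ 2 = algebraMap A B (ϖ * δ)) (hB : IsBasisOneAnd A π) {b : B} :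
    ¬IsUnit b ↔ b ∈ Ideal.span {π} := by
  have hϖm : ϖ ∈ maximalIdeal A := hϖ ▸ Ideal.mem_span_singleton_self ϖ
  constructor
  · intro hb
    obtain ⟨⟨a₁, a₂⟩, rfl⟩ := (hB b).exists
    by_cases ha₁ : IsUnit a₁
    · exact absurd (isUnit_add_mul_of_isUnit hϖm hπ ha₁ a₂) hb
    · exact add_mul_mem_span_of_not_isUnit hϖ hδ hπ ha₁ a₂
  · rintro hb hu
    obtain ⟨c, rfl⟩ := Ideal.mem_span_singleton'.mp hb
    have hπu : IsUnit (algebraMap A B (ϖ * δ)) := hπ ▸ (isUnit_of_mul_isUnit_right hu).pow 2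
    exact (mem_maximalIdeal _).mp hϖm
      (isUnit_of_mul_isUnit_left (hB.isUnit_of_isUnit_algebraMap hπu))

theorem IsBasisOneAnd.isDiscreteValuationRing [IsDomain A] [IsDiscreteValuationRing A]
    [IsDomain B] (hϖ : maximalIdeal A = Ideal.span {ϖ}) (hδ : IsUnit δ)
    (hπ : π ^ 2 = algebraMap A B (ϖ * δ)) (hB : IsBasisOneAnd A π) :
    IsDiscreteValuationRing B := by
  have := hB.finite
  have : IsNoetherianRing B :=
    isNoetherian_of_tower A (isNoetherian_of_isNoetherianRing_of_finite A B)
  have : IsLocalRing B := .of_nonunits_add fun a b ha hb =>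
    (not_isUnit_iff_mem_span hϖ hδ hπ hB).mpr <| Ideal.add_mem _
      ((not_isUnit_iff_mem_span hϖ hδ hπ hB).mp ha) ((not_isUnit_iff_mem_span hϖ hδ hπ hB).mp hb)
  have hmax : maximalIdeal B = Ideal.span {π} :=
    Ideal.ext fun b => (mem_maximalIdeal b).trans (not_isUnit_iff_mem_span hϖ hδ hπ hB)
  have hϖ0 : ϖ ≠ 0 := by
    rintro rfl
    exact IsDiscreteValuationRing.not_a_field A (by simpa using hϖ)
  have hπ0 := ne_zero_of_sq_eq_algebraMap hB (mul_ne_zero hϖ0 hδ.ne_zero) hπ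
  have hfield : ¬IsField B := by
    rw [isField_iff_maximalIdeal_eq, hmax, Ideal.span_singleton_eq_bot]
    exact hπ0
  have hprinc : (maximalIdeal B).IsPrincipal := ⟨π, hmax⟩
  exact ((IsDiscreteValuationRing.TFAE B hfield).out 0 4).mpr hprinc

end QuadraticExtension

section HermitianLattice

variable {A B E V : Type*} [CommRing A] [CommRing B] [Algebra A B] [Field E] [Algebra B E]
  [AddCommGroup V] [Module E V] [Module B V]
  [IsScalarTower B E V] {π : B} {σ : B ≃ₐ[A] B} {σE : E ≃+* E}
  (S : V →ₛₗ[(σE : E →+* E)] V →ₗ[E] E) (L : Submodule B V)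

theorem apply_smul_left (hσE : ∀ b : B, σE (algebraMap B E b) = algebraMap B E (σ b))
    (c : B) (x y : V) : S (c • x) y = algebraMap B E (σ c) * S x y := by
  rw [← algebraMap_smul E c x, LinearMap.map_smulₛₗ₂, RingEquiv.coe_toRingHom, hσE, smul_eq_mul]

theorem apply_smul_right (c : B) (x y : V) : S x (c • y) = algebraMap B E c * S x y := by
  rw [← algebraMap_smul E c y, map_smul, smul_eq_mul]

def aiSubmodule (hσE : ∀ b : B, σE (algebraMap B E b) = algebraMap B E (σ b)) (i : ℕ) :
    Submodule B V where
  carrier := AiSetV L π (fun x y => S x y) i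
  zero_mem' := ⟨L.zero_mem, fun _ _ => ⟨0, by simp⟩⟩
  add_mem' := by
    rintro x y ⟨hxL, hx⟩ ⟨hyL, hy⟩
    refine ⟨L.add_mem hxL hyL, fun w hw => ?_⟩
    obtain ⟨b₁, hb₁⟩ := hx w hw
    obtain ⟨b₂, hb₂⟩ := hy w hw
    exact ⟨b₁ + b₂, by simp only [map_add, LinearMap.add_apply, hb₁, hb₂, mul_add]⟩
  smul_mem' := by
    rintro c x ⟨hxL, hx⟩
    refine ⟨L.smul_mem c hxL, fun w hw => ?_⟩
    obtain ⟨b, hb⟩ := hx w hw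
    refine ⟨σ c * b, ?_⟩
    simp only [apply_smul_left S hσE, hb, ← map_mul]
    ring_nf

def biSubmodule [Algebra A E] [IsScalarTower A B E] {δ : A} (hS : S.IsSymm)
    (hσE : ∀ b : B, σE (algebraMap B E b) = algebraMap B E (σ b)) (hσπ : σ π = -π)
    (hπ : π ^ 2 = algebraMap A B (2 * δ)) (hB : IsBasisOneAnd A π) (k : ℕ) :
    Submodule B V where
  carrier := BiSetV A L π (fun x y => S x y) (2 * k + 1)
  zero_mem' := ⟨(aiSubmodule S L hσE _).zero_mem, 0, by simp⟩
  add_mem' := by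
    rintro x y ⟨hxA, aₓ, haₓ⟩ ⟨hyA, a_y, ha_y⟩
    refine ⟨(aiSubmodule S L hσE _).add_mem hxA hyA, ?_⟩
    obtain ⟨b, hb : S x y = _⟩ := hxA.2 y hyA.1
    obtain ⟨a, ha⟩ := exists_pow_odd_mul_add_conj_eq hσπ hπ hB k b
    have htrace : S x y + S y x = algebraMap A E (2 ^ (k + 2) * a) := by
      rw [← hS.eq x y, hb, RingEquiv.coe_toRingHom, hσE, ← map_add, ha,
        ← IsScalarTower.algebraMap_apply]
    refine ⟨aₓ + a_y + a, ?_⟩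
    beta_reduce at haₓ ha_y ⊢
    rw [show (2 * k + 1 + 1) / 2 + 1 = k + 2 by omega] at haₓ ha_y ⊢
    simp only [map_add, LinearMap.add_apply, mul_add]
    linear_combination haₓ + ha_y + htrace
  smul_mem' := by
    rintro c x ⟨hxA, aₓ, haₓ⟩
    refine ⟨(aiSubmodule S L hσE _).smul_mem c hxA, ?_⟩
    obtain ⟨n, hn⟩ := exists_mul_conj_eq hσπ hπ hB c
    refine ⟨n * aₓ, ?_⟩
    beta_reduce at haₓ ⊢
    rw [apply_smul_left S hσE, apply_smul_right, haₓ, ← mul_assoc, ← map_mul, mul_comm (σ c), hn,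
      ← IsScalarTower.algebraMap_apply, ← map_mul]
    congr 1
    ring

theorem pow_smul_mem_biSetV [Algebra A E] [IsScalarTower A B E] [IsDomain A] [IsDomain B]
    [IsFractionRing B E] {δ : A} (hS : S.IsSymm)
    (hσE : ∀ b : B, σE (algebraMap B E b) = algebraMap B E (σ b)) (hσπ : σ π = -π)
    (hπ : π ^ 2 = algebraMap A B (2 * δ)) (h2 : (2 : A) ≠ 0) (hπ0 : π ≠ 0)
    (hB : IsBasisOneAnd A π) (hLB : ∀ x ∈ L, ∀ y ∈ L, ∃ b : B, S x y = algebraMap B E b)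
    (k : ℕ) {x : V} (hx : x ∈ L) :
    π ^ (2 * k + 2) • x ∈ BiSetV A L π (fun x y => S x y) (2 * k + 1) := by
  have hσpow : σ (π ^ (2 * k + 2)) = π ^ (2 * k + 2) := by
    rw [map_pow, hσπ, Even.neg_pow ⟨k + 1, by ring⟩]
  refine ⟨⟨L.smul_mem _ hx, fun w hw => ?_⟩, ?_⟩
  · obtain ⟨b, hb⟩ := hLB x hx w hw
    refine ⟨π * b, ?_⟩
    beta_reduce
    rw [apply_smul_left S hσE, hσpow, hb, ← map_mul]
    ring_nf
  · obtain ⟨b, hb⟩ := hLB x hx x hx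
    have hσb : σ b = b := IsFractionRing.injective B E <| by
      rw [← hσE, ← hb, ← RingEquiv.coe_toRingHom, hS.eq]
    obtain ⟨a, rfl⟩ := exists_eq_algebraMap_of_conj_eq hσπ h2 hπ0 hB hσb
    have hsq : π ^ (2 * k + 2) * π ^ (2 * k + 2) = algebraMap A B ((2 * δ) ^ (2 * k + 2)) := by
      rw [map_pow, ← hπ]
      ring
    refine ⟨2 ^ k * δ ^ (2 * k + 2) * a, ?_⟩
    beta_reduce
    rw [apply_smul_left S hσE, apply_smul_right, hσpow, hb, ← mul_assoc, ← map_mul, hsq,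
      ← IsScalarTower.algebraMap_apply, ← IsScalarTower.algebraMap_apply, ← map_mul,
      show (2 * k + 1 + 1) / 2 + 1 = k + 2 by omega]
    congr 1
    ring

theorem isLattice_biSubmodule [Algebra A E] [IsScalarTower A B E] [IsDomain A] [IsDomain B]
    [IsNoetherianRing B] [IsFractionRing B E] {δ : A} (hS : S.IsSymm)
    (hσE : ∀ b : B, σE (algebraMap B E b) = algebraMap B E (σ b)) (hσπ : σ π = -π)
    (hπ : π ^ 2 = algebraMap A B (2 * δ)) (h2 : (2 : A) ≠ 0) (hπ0 : π ≠ 0)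
    (hB : IsBasisOneAnd A π)
    [Module.Finite B L] (hL : Submodule.span E (L : Set V) = ⊤)
    (hLB : ∀ x ∈ L, ∀ y ∈ L, ∃ b : B, S x y = algebraMap B E b) (k : ℕ) :
    (biSubmodule S L hS hσE hσπ hπ hB k).IsLattice E where
  fg := Submodule.FG.of_le_of_isNoetherian (T := L) fun _ hx => hx.1.1
  span_eq_top := by
    refine eq_top_iff.mpr (hL ▸ Submodule.span_le.mpr fun x hx => ?_)
    have hu : algebraMap B E (π ^ (2 * k + 2)) ≠ 0 :=
      (map_ne_zero_iff _ (IsFractionRing.injective B E)).mpr (pow_ne_zero _ hπ0)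
    rw [← inv_smul_smul₀ hu x, algebraMap_smul]
    exact Submodule.smul_mem _ _ <| Submodule.subset_span <|
      pow_smul_mem_biSetV S L hS hσE hσπ hπ h2 hπ0 hB hLB k hx

end HermitianLattice

theorem identity_on_AiBi_iff_identity_on_duals_general
    {A : Type*} [CommRing A] [IsDomain A] [IsDiscreteValuationRing A] [CharZero A]
    (hmax : IsLocalRing.maximalIdeal A = Ideal.span {2})
    (δ : A) (hδunit : IsUnit δ)
    {B : Type*} [CommRing B] [IsDomain B] [Algebra A B]
    (π : B) (hπ : π ^ 2 = algebraMap A B (2 * δ))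
    (σ : B ≃ₐ[A] B) (hσπ : σ π = -π)
    (hBfree : ∀ b : B, ∃! p : A × A, b = algebraMap A B p.1 + algebraMap A B p.2 * π)
    {E : Type*} [Field E] [Algebra B E] [IsFractionRing B E]
    [Algebra A E] [IsScalarTower A B E]
    (σE : E ≃+* E) (hσE : ∀ b : B, σE (algebraMap B E b) = algebraMap B E (σ b))
    {V : Type*} [AddCommGroup V] [Module E V] [Module B V] [IsScalarTower B E V]
    (H : V → V → E)
    (Hadd : ∀ x y z : V, H (x + y) z = H x z + H y z)
    (Hsmul : ∀ (a b : E) (v w : V), H (a • v) (b • w) = σE a * b * H v w)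
    (Hsymm : ∀ v w : V, H w v = σE (H v w))
    (Hnd : ∀ v : V, (∀ w : V, H v w = 0) → v = 0)
    (L : Submodule B V) [Module.Finite B L]
    (hLspan : Submodule.span E (L : Set V) = ⊤)
    (hLB : ∀ x ∈ L, ∀ y ∈ L, ∃ b : B, H x y = algebraMap B E b)
    (i : ℕ) (hi : Odd i)
    (g : V ≃ₗ[E] V) (hg : ∀ x y : V, H (g x) (g y) = H x y)
    (hgA : g '' AiSetV L π H i = AiSetV L π H i)
    (hgB : g '' BiSetV A L π H i = BiSetV A L π H i) :
    (∀ x ∈ AiSetV L π H i, g x - x ∈ BiSetV A L π H i) ↔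
    (∀ y ∈ perpSet B H (BiSetV A L π H i), g y - y ∈ perpSet B H (AiSetV L π H i)) := by
  obtain ⟨k, rfl⟩ := hi
  obtain ⟨S, hS, rfl⟩ := exists_isSymm_sesqForm_eq σE H Hadd Hsmul Hsymm
  have hπ0 : π ≠ 0 :=
    ne_zero_of_sq_eq_algebraMap hBfree (mul_ne_zero two_ne_zero hδunit.ne_zero) hπ
  have := IsBasisOneAnd.isDiscreteValuationRing hmax hδunit hπ hBfree
  have := isLattice_biSubmodule S L hS hσE hσπ hπ two_ne_zero hπ0 hBfree hLspan hLB k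
  constructor
  · refine sub_mem_perpSet_of_sub_mem S g hg fun x hx => ?_
    rw [← hgA, g.image_eq_preimage_symm] at hx
    exact hx
  · intro h x hx
    refine perpSet_perpSet_subset S hS Hnd σ.toRingEquiv hσE
      (biSubmodule S L hS hσE hσπ hπ hBfree k) ?_
    exact sub_mem_perpSet_perpSet_of_sub_mem_perpSet S g hg hS σ.toRingEquiv hσE
      (fun w hw => hgB ▸ Set.mem_image_of_mem g hw) h x hx

/-- for odd `i`, an `h`-preserving `E`-linear automorphism `g` of `V`
stabilizing `A_i` and `B_i` induces the identity on `A_i/B_i` iff it induces the identity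
on `B_i^⊥/A_i^⊥`. -/
theorem identity_on_AiBi_iff_identity_on_duals
    {A : Type*} [CommRing A] [IsDomain A] [IsDiscreteValuationRing A] [CharZero A]
    (hmax : IsLocalRing.maximalIdeal A = Ideal.span {2})
    [IsAdicComplete (IsLocalRing.maximalIdeal A) A]
    [CharP (IsLocalRing.ResidueField A) 2]
    [PerfectRing (IsLocalRing.ResidueField A) 2]
    (δ : A) (hδunit : IsUnit δ) (hδ1 : (2 : A) ∣ (δ - 1))
    {B : Type*} [CommRing B] [IsDomain B] [Algebra A B]
    (π : B) (hπ : π ^ 2 = algebraMap A B (2 * δ))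
    (σ : B ≃ₐ[A] B) (hσπ : σ π = -π) (hσinv : ∀ b : B, σ (σ b) = b)
    (hBfree : ∀ b : B, ∃! p : A × A, b = algebraMap A B p.1 + algebraMap A B p.2 * π)
    {E : Type*} [Field E] [Algebra B E] [IsFractionRing B E]
    [Algebra A E] [IsScalarTower A B E]
    (σE : E ≃+* E) (hσE : ∀ b : B, σE (algebraMap B E b) = algebraMap B E (σ b))
    {V : Type*} [AddCommGroup V] [Module E V] [Module B V] [IsScalarTower B E V]
    (H : V → V → E)
    (Hadd : ∀ x y z : V, H (x + y) z = H x z + H y z)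
    (Hsmul : ∀ (a b : E) (v w : V), H (a • v) (b • w) = σE a * b * H v w)
    (Hsymm : ∀ v w : V, H w v = σE (H v w))
    (Hnd : ∀ v : V, (∀ w : V, H v w = 0) → v = 0)
    (L : Submodule B V) [Module.Free B L] [Module.Finite B L]
    (hLspan : Submodule.span E (L : Set V) = ⊤)
    (hLB : ∀ x ∈ L, ∀ y ∈ L, ∃ b : B, H x y = algebraMap B E b)
    (i : ℕ) (hi : Odd i)
    (g : V ≃ₗ[E] V) (hg : ∀ x y : V, H (g x) (g y) = H x y)
    (hgA : g '' AiSetV L π H i = AiSetV L π H i)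
    (hgB : g '' BiSetV A L π H i = BiSetV A L π H i) :
    (∀ x ∈ AiSetV L π H i, g x - x ∈ BiSetV A L π H i) ↔
    (∀ y ∈ perpSet B H (BiSetV A L π H i), g y - y ∈ perpSet B H (AiSetV L π H i)) :=
  identity_on_AiBi_iff_identity_on_duals_general hmax δ hδunit π hπ σ hσπ hBfree σE hσE H Hadd Hsmul
    Hsymm Hnd L hLspan hLB i hi g hg hgA hgB
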